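/- arXiv:1901.01011 — 2 statements merged into one kernel-verified Lean document; each statement's English description precedes it below -/
import Mathlib

section
/- Define f₅ := χ_{(−1,0)} + Σ_{n≥1} χ_{(2^{−n+1} − 2^{−n−1}, 2^{−n+1})} (a characteristic function of an open set, the summands having pairwise disjoint supports). Then: (i) if x belongs to the open set (−1,0) ∪ ⋃_{n≥1}(2^{−n+1} − 2^{−n−1}, 2^{−n+1}), then Tf₅(x) = 0; and (ii) for every integer n ≥ 2, at the point x = 2^{−n+1} − 2^{−n−1} one has Tf₅(x) = 1 − x. -/
open MeasureTheory Filter Set Topology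
open scoped Classical ENNReal

noncomputable def avgFn (f : ℝ → ℝ) (x r : ℝ) : ℝ :=
  (1 / (2 * r)) * ∫ y in (-r)..r, f (x + y)

noncomputable def maxFn (f : ℝ → ℝ) (x : ℝ) : ENNReal :=
  ⨆ (r : ℝ) (_ : 0 < r), ENNReal.ofReal (avgFn (fun y => |f y|) x r)

def freqSet (f : ℝ → ℝ) (x : ℝ) : Set ℝ :=
  {r : ℝ | 0 < r ∧ maxFn f x = ENNReal.ofReal (avgFn (fun y => |f y|) x r)}

noncomputable def freqFn (f : ℝ → ℝ) (x : ℝ) : ℝ :=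
  if (freqSet f x).Nonempty then sInf (freqSet f x) else 0

noncomputable def fFive : ℝ → ℝ := fun x =>
  Set.indicator (Set.Ioo (-1 : ℝ) 0) (fun _ => (1 : ℝ)) x +
    ∑' n : ℕ, Set.indicator
      (Set.Ioo ((2:ℝ) ^ (-(n : ℤ)) - (2:ℝ) ^ (-(n : ℤ) - 2)) ((2:ℝ) ^ (-(n : ℤ))))
      (fun _ => (1 : ℝ)) x

/-! ### Auxiliary development -/

namespace Fractal

/-- The `k`-th interval. -/
def Ik (k : ℕ) : Set ℝ :=
  Set.Ioo ((2:ℝ) ^ (-(k : ℤ)) - (2:ℝ) ^ (-(k : ℤ) - 2)) ((2:ℝ) ^ (-(k : ℤ)))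

/-- The open set whose indicator is `fFive`. -/
def UU : Set ℝ := Set.Ioo (-1 : ℝ) 0 ∪ ⋃ k : ℕ, Ik k

lemma two_zpow_pos (m : ℤ) : (0:ℝ) < 2 ^ m := zpow_pos (by norm_num) m

lemma Ik_left (k : ℕ) : (2:ℝ) ^ (-(k:ℤ)) - (2:ℝ) ^ (-(k:ℤ) - 2) = 3 * 2 ^ (-(k:ℤ) - 2) := by
  have h : (2:ℝ) ^ (-(k:ℤ)) = 2 ^ (-(k:ℤ) - 2) * 2 ^ (2:ℤ) := by
    rw [← zpow_add₀ (two_ne_zero)]; ring_nf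
  rw [h]; norm_num; ring

lemma Ik_subset (k : ℕ) : Ik k ⊆ Set.Ioo (0:ℝ) ((2:ℝ) ^ (-(k:ℤ))) := by
  intro t ht
  rcases ht with ⟨h1, h2⟩
  refine ⟨lt_of_le_of_lt ?_ h1, h2⟩
  rw [Ik_left]
  positivity

lemma Ik_disjoint {j k : ℕ} (h : j < k) : Disjoint (Ik j) (Ik k) := by
  rw [Set.disjoint_left]
  intro t htj htk
  have h1 : (2:ℝ) ^ (-(j:ℤ)) - (2:ℝ) ^ (-(j:ℤ) - 2) < t := htj.1
  have h2 : t < (2:ℝ) ^ (-(k:ℤ)) := htk.2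
  have hk : (2:ℝ) ^ (-(k:ℤ)) ≤ 2 ^ (-(j:ℤ) - 1) := by
    apply zpow_le_zpow_right₀ (by norm_num : (1:ℝ) ≤ 2) (by omega)
  have : (2:ℝ) ^ (-(j:ℤ) - 1) ≤ 2 ^ (-(j:ℤ)) - 2 ^ (-(j:ℤ) - 2) := by
    rw [Ik_left]
    have e1 : (2:ℝ) ^ (-(j:ℤ) - 1) = 2 ^ (-(j:ℤ) - 2) * 2 := by
      rw [← zpow_add_one₀ (two_ne_zero : (2:ℝ) ≠ 0)]; ring_nf
    rw [e1]
    nlinarith [two_zpow_pos (-(j:ℤ) - 2)]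
  linarith

lemma Ik_pairwise : Pairwise (Function.onFun Disjoint Ik) := by
  intro j k hjk
  rcases lt_or_gt_of_ne hjk with h | h
  · exact Ik_disjoint h
  · exact (Ik_disjoint h).symm

lemma Ioo_disjoint_Ik (k : ℕ) : Disjoint (Set.Ioo (-1:ℝ) 0) (Ik k) := by
  rw [Set.disjoint_left]
  intro t ht htk
  exact absurd ((Ik_subset k htk).1) (not_lt.mpr ht.2.le)

lemma measurable_UU : MeasurableSet UU := by
  apply MeasurableSet.union measurableSet_Ioo
  exact MeasurableSet.iUnion (fun k => measurableSet_Ioo)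

/-- pointwise description of `fFive`. -/
lemma fFive_eq : fFive = Set.indicator UU (fun _ => (1:ℝ)) := by
  funext x
  unfold fFive UU
  by_cases hx : ∃ m : ℕ, x ∈ Ik m
  · obtain ⟨m, hm⟩ := hx
    have hsum : ∑' n : ℕ, Set.indicator (Ik n) (fun _ => (1:ℝ)) x = 1 := by
      rw [tsum_eq_single m]
      · simp [Set.indicator_of_mem hm]
      · intro n hn
        have : x ∉ Ik n := by
          intro hxn
          exact (Ik_pairwise hn).le_bot ⟨hxn, hm⟩
        simp [Set.indicator_of_notMem this]
    have hx0 : x ∉ Set.Ioo (-1:ℝ) 0 := fun h => (Ioo_disjoint_Ik m).le_bot ⟨h, hm⟩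
    have hxU : x ∈ Set.Ioo (-1:ℝ) 0 ∪ ⋃ k, Ik k := Set.mem_union_right _ (Set.mem_iUnion.mpr ⟨m, hm⟩)
    simp only [Ik] at hsum
    rw [hsum, Set.indicator_of_notMem hx0, Set.indicator_of_mem hxU]
    norm_num
  · push_neg at hx
    have hsum : ∑' n : ℕ, Set.indicator (Ik n) (fun _ => (1:ℝ)) x = 0 := by
      convert tsum_zero with n
      simp [Set.indicator_of_notMem (hx n)]
    simp only [Ik] at hsum
    rw [hsum]
    by_cases h0 : x ∈ Set.Ioo (-1:ℝ) 0
    · rw [Set.indicator_of_mem h0, Set.indicator_of_mem (Set.mem_union_left _ h0)]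
      norm_num
    · have : x ∉ Set.Ioo (-1:ℝ) 0 ∪ ⋃ k, Ik k := by
        rintro (h | h)
        · exact h0 h
        · obtain ⟨k, hk⟩ := Set.mem_iUnion.mp h
          exact hx k hk
      rw [Set.indicator_of_notMem h0, Set.indicator_of_notMem this]
      norm_num

lemma fFive_nonneg (x : ℝ) : 0 ≤ fFive x := by
  rw [fFive_eq]; exact Set.indicator_nonneg (fun _ _ => zero_le_one) x

lemma abs_fFive : (fun y => |fFive y|) = fFive := by
  funext y; exact abs_of_nonneg (fFive_nonneg y)

lemma vol_Ioc_eq (a b : ℝ) : volume (UU ∩ Set.Ioc a b) = volume (UU ∩ Set.Ioo a b) := by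
  apply le_antisymm
  · have hsub : UU ∩ Set.Ioc a b ⊆ (UU ∩ Set.Ioo a b) ∪ {b} := by
      rintro t ⟨ht, h1, h2⟩
      rcases eq_or_lt_of_le h2 with h | h
      · exact Or.inr (by simp [h])
      · exact Or.inl ⟨ht, h1, h⟩
    calc volume (UU ∩ Set.Ioc a b) ≤ volume ((UU ∩ Set.Ioo a b) ∪ {b}) := measure_mono hsub
      _ ≤ volume (UU ∩ Set.Ioo a b) + volume ({b} : Set ℝ) := measure_union_le _ _
      _ = volume (UU ∩ Set.Ioo a b) := by simp
  · exact measure_mono (Set.inter_subset_inter_right _ Set.Ioo_subset_Ioc_self)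

/-- The integral over `[a,b]` of `fFive`. -/
lemma integral_fFive (a b : ℝ) (hab : a ≤ b) :
    ∫ t in a..b, fFive t = (volume (UU ∩ Set.Ioo a b)).toReal := by
  rw [intervalIntegral.integral_of_le hab, fFive_eq]
  rw [setIntegral_indicator measurable_UU]
  rw [setIntegral_const]
  rw [Set.inter_comm, Measure.real, vol_Ioc_eq]
  simp

/-- `avgFn` in terms of the measure of `UU`. -/
lemma avg_eq (x r : ℝ) (hr : 0 < r) :
    avgFn (fun y => |fFive y|) x r = (1 / (2*r)) * (volume (UU ∩ Set.Ioo (x - r) (x + r))).toReal := by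
  have habs : ∀ y : ℝ, |fFive y| = fFive y := fun y => abs_of_nonneg (fFive_nonneg y)
  rw [avgFn]
  simp only [habs]
  rw [intervalIntegral.integral_comp_add_left fFive x]
  rw [show x + -r = x - r by ring, integral_fFive _ _ (by linarith)]

/-- powers as geometric terms -/
lemma zpow_neg_nat (k : ℕ) : (2:ℝ) ^ (-(k:ℤ)) = (1/2)^k := by
  rw [zpow_neg, zpow_natCast, ← inv_pow]; norm_num
lemma zpow_neg_nat2 (k : ℕ) : (2:ℝ) ^ (-(k:ℤ) - 2) = (1/4) * (1/2)^k := by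
  rw [zpow_sub₀ (two_ne_zero), zpow_neg, zpow_natCast, ← inv_pow]
  norm_num; ring

lemma vol_Ik (k : ℕ) : volume (Ik k) = ENNReal.ofReal ((2:ℝ) ^ (-(k:ℤ) - 2)) := by
  rw [Ik, Real.volume_Ioo]
  congr 1; ring

/-- splitting of the measure -/
lemma V_split (S : Set ℝ) (hS : MeasurableSet S) :
    volume (UU ∩ S) = volume (Set.Ioo (-1:ℝ) 0 ∩ S) + ∑' k, volume (Ik k ∩ S) := by
  have hU : UU ∩ S = (Set.Ioo (-1:ℝ) 0 ∩ S) ∪ ⋃ k, (Ik k ∩ S) := by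
    rw [UU, Set.union_inter_distrib_right, Set.iUnion_inter]
  rw [hU, measure_union, measure_iUnion]
  · intro j k hjk
    exact (Ik_pairwise hjk).mono Set.inter_subset_left Set.inter_subset_left
  · exact fun k => (measurableSet_Ioo.inter hS)
  · apply Set.disjoint_iUnion_right.mpr
    intro k
    exact (Ioo_disjoint_Ik k).mono Set.inter_subset_left Set.inter_subset_left
  · exact (MeasurableSet.iUnion fun k => measurableSet_Ioo.inter hS)

lemma summable_bound : Summable (fun k : ℕ => (2:ℝ) ^ (-(k:ℤ) - 2)) := by
  simp only [zpow_neg_nat2]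
  exact (summable_geometric_of_lt_one (by norm_num) (by norm_num)).mul_left _

lemma tsum_bound : ∑' k : ℕ, (2:ℝ) ^ (-(k:ℤ) - 2) = 1/2 := by
  simp only [zpow_neg_nat2]
  rw [tsum_mul_left, tsum_geometric_of_lt_one (by norm_num) (by norm_num)]
  norm_num

lemma vol_inter_ne_top (k : ℕ) (S : Set ℝ) : volume (Ik k ∩ S) ≠ ⊤ := by
  apply ne_of_lt
  calc volume (Ik k ∩ S) ≤ volume (Ik k) := measure_mono Set.inter_subset_left
    _ < ⊤ := by rw [vol_Ik]; exact ENNReal.ofReal_lt_top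

lemma summable_vol (S : Set ℝ) : Summable (fun k => (volume (Ik k ∩ S)).toReal) := by
  apply Summable.of_nonneg_of_le (fun k => ENNReal.toReal_nonneg) _ summable_bound
  intro k
  have : volume (Ik k ∩ S) ≤ ENNReal.ofReal ((2:ℝ) ^ (-(k:ℤ) - 2)) := by
    rw [← vol_Ik]; exact measure_mono Set.inter_subset_left
  calc (volume (Ik k ∩ S)).toReal ≤ (ENNReal.ofReal ((2:ℝ) ^ (-(k:ℤ) - 2))).toReal :=
        ENNReal.toReal_mono ENNReal.ofReal_ne_top this
    _ ≤ (2:ℝ) ^ (-(k:ℤ) - 2) := by rw [ENNReal.toReal_ofReal (le_of_lt (two_zpow_pos _))]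

lemma tsum_vol_ne_top (S : Set ℝ) : (∑' k, volume (Ik k ∩ S)) ≠ ⊤ := by
  apply ne_of_lt
  calc ∑' k, volume (Ik k ∩ S) ≤ ∑' k, volume (Ik k) :=
        ENNReal.tsum_le_tsum (fun k => measure_mono Set.inter_subset_left)
    _ = ∑' k : ℕ, ENNReal.ofReal ((2:ℝ) ^ (-(k:ℤ) - 2)) := tsum_congr (fun k => vol_Ik k)
    _ = ENNReal.ofReal (∑' k : ℕ, (2:ℝ) ^ (-(k:ℤ) - 2)) :=
        (ENNReal.ofReal_tsum_of_nonneg (fun k => (two_zpow_pos _).le) summable_bound).symm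
    _ < ⊤ := ENNReal.ofReal_lt_top

/-- real-valued master formula -/
lemma mEq (S : Set ℝ) (hS : MeasurableSet S) :
    (volume (UU ∩ S)).toReal
      = (volume (Set.Ioo (-1:ℝ) 0 ∩ S)).toReal + ∑' k, (volume (Ik k ∩ S)).toReal := by
  rw [V_split S hS, ENNReal.toReal_add, ENNReal.tsum_toReal_eq (fun k => vol_inter_ne_top k S)]
  · apply ne_of_lt
    calc volume (Set.Ioo (-1:ℝ) 0 ∩ S) ≤ volume (Set.Ioo (-1:ℝ) 0) := measure_mono Set.inter_subset_left
      _ < ⊤ := by rw [Real.volume_Ioo]; exact ENNReal.ofReal_lt_top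
  · exact tsum_vol_ne_top S

/-- value of each summand for `S = Iio t` -/
lemma Lk_formula (k : ℕ) (t : ℝ) :
    (volume (Ik k ∩ Set.Iio t)).toReal
      = max (min ((2:ℝ)^(-(k:ℤ))) t - 3 * 2^(-(k:ℤ)-2)) 0 := by
  rw [Ik, Set.Ioo_inter_Iio, Real.volume_Ioo, ENNReal.toReal_ofReal', Ik_left]

lemma Lk_le_len (k : ℕ) (t : ℝ) :
    (volume (Ik k ∩ Set.Iio t)).toReal ≤ (2:ℝ) ^ (-(k:ℤ) - 2) := by
  rw [Lk_formula]
  apply max_le _ (two_zpow_pos _).le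
  have : min ((2:ℝ)^(-(k:ℤ))) t ≤ (2:ℝ)^(-(k:ℤ)) := min_le_left _ _
  have h4 : (2:ℝ) ^ (-(k:ℤ)) = 4 * 2 ^ (-(k:ℤ) - 2) := by
    rw [zpow_neg_nat, zpow_neg_nat2]; ring
  nlinarith [two_zpow_pos (-(k:ℤ) - 2)]

/-- existence of dyadic scale -/
lemma exists_scale (t : ℝ) (h0 : 0 < t) (h1 : t ≤ 1) :
    ∃ K : ℕ, (2:ℝ)^(-(K:ℤ)) ≤ t ∧ t < 2^(-(K:ℤ)+1) := by
  have hex : ∃ n : ℕ, (2:ℝ)^(-(n:ℤ)) ≤ t := by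
    obtain ⟨n, hn⟩ := pow_unbounded_of_one_lt t⁻¹ (by norm_num : (1:ℝ) < 2)
    refine ⟨n, ?_⟩
    rw [zpow_neg, zpow_natCast]
    rw [inv_le_comm₀ (by positivity) h0]
    exact hn.le
  classical
  refine ⟨Nat.find hex, Nat.find_spec hex, ?_⟩
  rcases Nat.eq_zero_or_eq_succ_pred (Nat.find hex) with h | h
  · rw [h]
    norm_num
    linarith
  · have hm : Nat.find hex - 1 < Nat.find hex := by omega
    have := Nat.find_min hex hm
    push_neg at this
    have hcast : (-(Nat.find hex : ℤ) + 1) = -((Nat.find hex - 1 : ℕ) : ℤ) := by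
      have : (1:ℕ) ≤ Nat.find hex := by omega
      push_cast [this]
      ring
    rw [hcast]
    exact this

-- tail sum
lemma tsum_tail (K : ℕ) : ∑' i : ℕ, (2:ℝ) ^ (-((i+K:ℕ):ℤ) - 2) = 2^(-(K:ℤ)-1) := by
  have e : ∀ i : ℕ, (2:ℝ) ^ (-((i+K:ℕ):ℤ) - 2) = ((1/4) * (1/2)^K) * (1/2)^i := by
    intro i
    rw [zpow_neg_nat2, pow_add]
    ring
  simp only [e]
  rw [tsum_mul_left, tsum_geometric_of_lt_one (by norm_num) (by norm_num)]
  have : (2:ℝ)^(-(K:ℤ)-1) = (1/2) * (1/2)^K := by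
    rw [zpow_sub₀ (two_ne_zero), zpow_neg_nat]
    norm_num; ring
  rw [this]; norm_num; ring

lemma phi_le (t : ℝ) (h0 : 0 ≤ t) (h1 : t ≤ 1) :
    ∑' k, (volume (Ik k ∩ Set.Iio t)).toReal ≤ t / 2 := by
  rcases eq_or_lt_of_le h0 with rfl | ht
  · have : ∀ k, (volume (Ik k ∩ Set.Iio (0:ℝ))).toReal = 0 := by
      intro k
      rw [Lk_formula]
      have h1 : min ((2:ℝ)^(-(k:ℤ))) 0 = 0 := min_eq_right (two_zpow_pos _).le
      rw [h1]
      have := two_zpow_pos (-(k:ℤ)-2)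
      rw [max_eq_right (by nlinarith)]
    simp only [this, tsum_zero]
    norm_num
  obtain ⟨K, hK1, hK2⟩ := exists_scale t ht h1
  set L : ℕ → ℝ := fun k => (volume (Ik k ∩ Set.Iio t)).toReal with hL
  have hsum : Summable L := summable_vol (Set.Iio t)
  have hdecomp : ∑' k, L k = (∑ i ∈ Finset.range K, L i) + ∑' i, L (i+K) :=
    (Summable.sum_add_tsum_nat_add K hsum).symm
  rw [hdecomp]
  have htail : ∑' i : ℕ, L (i+K) ≤ 2^(-(K:ℤ)-1) := by
    rw [← tsum_tail K]
    have hs1 : Summable (fun i : ℕ => L (i+K)) := (summable_nat_add_iff (f := L) K).mpr hsum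
    have hs2 : Summable (fun i : ℕ => (2:ℝ) ^ (-((i+K:ℕ):ℤ) - 2)) :=
      summable_bound.comp_injective (add_left_injective K)
    apply Summable.tsum_le_tsum _ hs1 hs2
    · intro i
      calc L (i+K)
          ≤ (volume (Ik (i+K))).toReal := by
            apply ENNReal.toReal_mono
            · rw [vol_Ik]; exact ENNReal.ofReal_ne_top
            · exact measure_mono Set.inter_subset_left
        _ = (2:ℝ) ^ (-((i+K:ℕ):ℤ) - 2) := by
            rw [vol_Ik, ENNReal.toReal_ofReal (two_zpow_pos _).le]
  have hhead : ∑ i ∈ Finset.range K, L i ≤ max (t - 3 * 2^(-(K:ℤ)-1)) 0 := by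
    rcases Nat.eq_zero_or_eq_succ_pred K with hK0 | hKs
    · rw [hK0]
      simp [le_max_right]
    · set m := K - 1 with hm
      have hKm : K = m + 1 := hKs
      have hzero : ∀ i ∈ Finset.range K, i ≠ m → L i = 0 := by
        intro i hi hne
        have him : i < m := by
          have := Finset.mem_range.mp hi
          omega
        rw [hL]
        simp only []
        rw [Lk_formula]
        have hti : t ≤ 3 * 2^(-(i:ℤ)-2) := by
          have h2 : (2:ℝ)^(-(K:ℤ)+1) ≤ 2^(-(i:ℤ)-1) := by
            apply zpow_le_zpow_right₀ (by norm_num : (1:ℝ) ≤ 2) (by omega)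
          have h3 : (2:ℝ)^(-(i:ℤ)-1) ≤ 3 * 2^(-(i:ℤ)-2) := by
            have e1 : (2:ℝ)^(-(i:ℤ)-1) = 2 * 2^(-(i:ℤ)-2) := by
              rw [show (-(i:ℤ)-1) = (-(i:ℤ)-2)+1 by ring,
                zpow_add_one₀ (two_ne_zero : (2:ℝ) ≠ 0)]; ring
            rw [e1]
            nlinarith [two_zpow_pos (-(i:ℤ)-2)]
          linarith
        have : min ((2:ℝ)^(-(i:ℤ))) t - 3 * 2^(-(i:ℤ)-2) ≤ 0 := by
          have := min_le_right ((2:ℝ)^(-(i:ℤ))) t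
          linarith
        rw [max_eq_right this]
      rw [Finset.sum_eq_single_of_mem m (by rw [hKm]; exact Finset.self_mem_range_succ m) hzero]
      rw [hL]
      simp only []
      rw [Lk_formula]
      have hmin : min ((2:ℝ)^(-(m:ℤ))) t = t := by
        apply min_eq_right
        have : (2:ℝ)^(-(K:ℤ)+1) ≤ 2^(-(m:ℤ)) := by
          apply zpow_le_zpow_right₀ (by norm_num : (1:ℝ) ≤ 2) (by omega)
        linarith
      rw [hmin]
      have hexp : (3:ℝ) * 2^(-(m:ℤ)-2) = 3 * 2^(-(K:ℤ)-1) := by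
        congr 2
        omega
      rw [hexp]
  have e1 : (2:ℝ)^(-(K:ℤ)-1) = 2^(-(K:ℤ)) / 2 := by
    rw [zpow_sub₀ (two_ne_zero)]; norm_num
  have e2 : (2:ℝ)^(-(K:ℤ)+1) = 2 * 2^(-(K:ℤ)) := by
    rw [zpow_add₀ (two_ne_zero)]; norm_num; ring
  rcases max_cases (t - 3 * 2^(-(K:ℤ)-1)) 0 with ⟨hmx, hc⟩ | ⟨hmx, hc⟩ <;>
  · rw [hmx] at hhead
    nlinarith [hhead, htail, hK1, hK2]

lemma phi_full (t : ℝ) (h : 1 ≤ t) :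
    ∑' k, (volume (Ik k ∩ Set.Iio t)).toReal = 1/2 := by
  have : ∀ k : ℕ, Ik k ∩ Set.Iio t = Ik k := by
    intro k
    apply Set.inter_eq_left.mpr
    intro s hs
    have h2 : (2:ℝ)^(-(k:ℤ)) ≤ 1 := by
      have := zpow_le_zpow_right₀ (by norm_num : (1:ℝ) ≤ 2) (by omega : -(k:ℤ) ≤ 0)
      simpa using this
    exact lt_of_lt_of_le hs.2 (le_trans h2 h)
  simp only [this]
  have : ∀ k : ℕ, (volume (Ik k)).toReal = (2:ℝ)^(-(k:ℤ)-2) := by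
    intro k
    rw [vol_Ik, ENNReal.toReal_ofReal (two_zpow_pos _).le]
  simp only [this]
  exact tsum_bound
lemma avg_le_one (x : ℝ) : ∀ r : ℝ, 0 < r → avgFn (fun y => |fFive y|) x r ≤ 1 := by
  intro r hr
  rw [avg_eq x r hr]
  have hv : volume (UU ∩ Set.Ioo (x-r) (x+r)) ≤ ENNReal.ofReal (2*r) := by
    calc volume (UU ∩ Set.Ioo (x-r) (x+r)) ≤ volume (Set.Ioo (x-r) (x+r)) :=
          measure_mono Set.inter_subset_right
      _ = ENNReal.ofReal (2*r) := by rw [Real.volume_Ioo]; congr 1; ring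
  have h2 : (ENNReal.ofReal (2*r)).toReal = 2*r := ENNReal.toReal_ofReal (by linarith)
  have h3 := ENNReal.toReal_mono ENNReal.ofReal_ne_top hv
  rw [h2] at h3
  calc (1/(2*r)) * (volume (UU ∩ Set.Ioo (x-r) (x+r))).toReal
      ≤ (1/(2*r)) * (2*r) := by
        apply mul_le_mul_of_nonneg_left h3 (by positivity)
    _ = 1 := by field_simp

lemma avg_interior {a b x : ℝ} (hsub : Set.Ioo a b ⊆ UU) {r : ℝ} (hr : 0 < r)
    (hra : a ≤ x - r) (hrb : x + r ≤ b) : avgFn (fun y => |fFive y|) x r = 1 := by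
  rw [avg_eq x r hr]
  have hss : UU ∩ Set.Ioo (x-r) (x+r) = Set.Ioo (x-r) (x+r) :=
    Set.inter_eq_right.mpr (subset_trans (Set.Ioo_subset_Ioo hra hrb) hsub)
  rw [hss, Real.volume_Ioo, ENNReal.toReal_ofReal (by linarith)]
  have : x + r - (x - r) = 2*r := by ring
  rw [this]
  field_simp

lemma freq_zero_of_interior {a b x : ℝ} (hsub : Set.Ioo a b ⊆ UU) (hx : x ∈ Set.Ioo a b) :
    freqFn fFive x = 0 := by
  obtain ⟨hax, hxb⟩ := hx
  set δ := min (x - a) (b - x) with hδ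
  have hδpos : 0 < δ := lt_min (by linarith) (by linarith)
  have havg1 : ∀ r : ℝ, 0 < r → r ≤ δ → avgFn (fun y => |fFive y|) x r = 1 := by
    intro r h1 h2
    apply avg_interior hsub h1
    · have := le_trans h2 (min_le_left (x-a) (b-x)); linarith
    · have := le_trans h2 (min_le_right (x-a) (b-x)); linarith
  have hmax : maxFn fFive x = 1 := by
    apply le_antisymm
    · apply iSup₂_le
      intro r hr
      calc ENNReal.ofReal (avgFn (fun y => |fFive y|) x r)
          ≤ ENNReal.ofReal 1 := ENNReal.ofReal_le_ofReal (avg_le_one x r hr)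
        _ = 1 := ENNReal.ofReal_one
    · have h1 := havg1 δ hδpos le_rfl
      calc (1:ℝ≥0∞) = ENNReal.ofReal (avgFn (fun y => |fFive y|) x δ) := by
            rw [h1, ENNReal.ofReal_one]
        _ ≤ maxFn fFive x :=
            le_iSup₂ (f := fun r (_ : 0 < r) => ENNReal.ofReal (avgFn (fun y => |fFive y|) x r))
              δ hδpos
  have hset : ∀ r : ℝ, 0 < r → r ≤ δ → r ∈ freqSet fFive x := by
    intro r h1 h2
    exact ⟨h1, by rw [hmax, havg1 r h1 h2, ENNReal.ofReal_one]⟩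
  have hne : (freqSet fFive x).Nonempty := ⟨δ, hset δ hδpos le_rfl⟩
  have hbdd : BddBelow (freqSet fFive x) := ⟨0, fun s hs => hs.1.le⟩
  rw [freqFn, if_pos hne]
  apply le_antisymm
  · by_contra hpos
    push_neg at hpos
    have hε : min δ (sInf (freqSet fFive x) / 2) ∈ freqSet fFive x :=
      hset _ (lt_min hδpos (by linarith)) (min_le_left _ _)
    have h4 := csInf_le hbdd hε
    have h3 := min_le_right δ (sInf (freqSet fFive x) / 2)
    rcases le_total δ (sInf (freqSet fFive x) / 2) with h | h
    · rw [min_eq_left h] at h4; linarith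
    · rw [min_eq_right h] at h4; linarith
  · exact le_csInf hne fun s hs => hs.1.le

lemma two_zpow_mono {a b : ℤ} (h : a ≤ b) : (2:ℝ)^a ≤ 2^b :=
  zpow_le_zpow_right₀ (by norm_num) h

section Part2
variable {n : ℕ} (hn : 2 ≤ n)

-- abbreviations
lemma ell_pos : (0:ℝ) < 2^(-(n:ℤ)-1) := two_zpow_pos _

include hn

lemma h2ell : (2:ℝ)^(-(n:ℤ)) = 2 * 2^(-(n:ℤ)-1) := by
  rw [show (-(n:ℤ)) = (-(n:ℤ)-1)+1 by ring, zpow_add_one₀ (two_ne_zero : (2:ℝ) ≠ 0)]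
  ring

lemma h4ell : (2:ℝ)^(1-(n:ℤ)) = 4 * 2^(-(n:ℤ)-1) := by
  rw [show (1-(n:ℤ)) = (-(n:ℤ)-1)+2 by ring, zpow_add₀ (two_ne_zero : (2:ℝ) ≠ 0)]
  norm_num
  ring

lemma ell_le : (2:ℝ)^(-(n:ℤ)-1) ≤ 1/8 := by
  have : (-(n:ℤ)-1) ≤ -3 := by omega
  calc (2:ℝ)^(-(n:ℤ)-1) ≤ 2^(-3:ℤ) := two_zpow_mono this
    _ = 1/8 := by norm_num

/-- the key inclusion for small radii -/
lemma incl_small {r t : ℝ} (hr : 0 < r) (hrx : r ≤ 3 * 2^(-(n:ℤ)-1))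
    (ht : t ∈ UU ∩ Set.Ioo (3 * 2^(-(n:ℤ)-1) - r) (3 * 2^(-(n:ℤ)-1) + r)) :
    t ∈ Set.Ioo (3 * 2^(-(n:ℤ)-1) - r) (2 * 2^(-(n:ℤ)-1))
      ∪ Set.Ioo (3 * 2^(-(n:ℤ)-1)) (3 * 2^(-(n:ℤ)-1) + min r (2^(-(n:ℤ)-1))) := by
  obtain ⟨htU, ht1, ht2⟩ := ht
  set ℓ : ℝ := 2^(-(n:ℤ)-1) with hℓ
  have hℓpos : (0:ℝ) < ℓ := two_zpow_pos _
  rcases htU with h0 | hk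
  · exact Or.inl ⟨ht1, by nlinarith [h0.2]⟩
  · obtain ⟨k, hk⟩ := Set.mem_iUnion.mp hk
    obtain ⟨hk1, hk2⟩ := hk
    rcases le_or_gt n k with hkn | hkn
    · -- k ≥ n : t < 2^{-k} ≤ 2ℓ
      left
      refine ⟨ht1, lt_of_lt_of_le hk2 ?_⟩
      rw [← h2ell hn]
      exact two_zpow_mono (by omega)
    · rcases eq_or_lt_of_le (Nat.lt_iff_add_one_le.mp hkn) with hkeq | hklt
      · -- k = n - 1
        right
        have hcast : (k:ℤ) = (n:ℤ) - 1 := by omega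
        have hrt : (2:ℝ)^(-(k:ℤ)) = 4 * ℓ := by
          rw [hcast, show (-((n:ℤ)-1)) = 1-(n:ℤ) by ring, h4ell hn]
        have hl : (2:ℝ)^(-(k:ℤ)) - (2:ℝ)^(-(k:ℤ)-2) = 3 * ℓ := by
          rw [hcast, show (-((n:ℤ)-1)-2) = -(n:ℤ)-1 by ring,
            show (-((n:ℤ)-1)) = 1-(n:ℤ) by ring, h4ell hn, hℓ]
          ring
        rw [hl] at hk1
        rw [hrt] at hk2
        refine ⟨hk1, ?_⟩
        rcases min_cases r ℓ with ⟨hm, _⟩ | ⟨hm, _⟩ <;> rw [hm] <;> linarith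
      · -- k + 1 < n, so k ≤ n-2 : left endpoint ≥ 6ℓ
        exfalso
        have h1 : (2:ℝ)^(-(n:ℤ)) ≤ 2^(-(k:ℤ)-2) := two_zpow_mono (by omega)
        have h2 : (6:ℝ) * ℓ ≤ 3 * 2^(-(k:ℤ)-2) := by
          have := h2ell hn
          nlinarith
        rw [Ik_left] at hk1
        nlinarith

/-- small radii: measure is at most `r` -/
lemma H1 {r : ℝ} (hr : 0 < r) (hrx : r ≤ 3 * 2^(-(n:ℤ)-1)) :
    (volume (UU ∩ Set.Ioo (3 * 2^(-(n:ℤ)-1) - r) (3 * 2^(-(n:ℤ)-1) + r))).toReal ≤ r := by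
  set ℓ : ℝ := 2^(-(n:ℤ)-1) with hℓ
  have hℓpos : (0:ℝ) < ℓ := two_zpow_pos _
  have hsub : UU ∩ Set.Ioo (3*ℓ - r) (3*ℓ + r) ⊆
      Set.Ioo (3*ℓ - r) (2*ℓ) ∪ Set.Ioo (3*ℓ) (3*ℓ + min r ℓ) :=
    fun t ht => incl_small hn hr hrx ht
  have hm : volume (UU ∩ Set.Ioo (3*ℓ - r) (3*ℓ + r))
      ≤ ENNReal.ofReal (max (r - ℓ) 0) + ENNReal.ofReal (min r ℓ) := by
    calc volume (UU ∩ Set.Ioo (3*ℓ - r) (3*ℓ + r))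
        ≤ volume ((Set.Ioo (3*ℓ - r) (2*ℓ)) ∪ (Set.Ioo (3*ℓ) (3*ℓ + min r ℓ))) :=
          measure_mono hsub
      _ ≤ volume (Set.Ioo (3*ℓ - r) (2*ℓ)) + volume (Set.Ioo (3*ℓ) (3*ℓ + min r ℓ)) :=
          measure_union_le _ _
      _ ≤ ENNReal.ofReal (max (r - ℓ) 0) + ENNReal.ofReal (min r ℓ) := by
          apply add_le_add
          · rw [Real.volume_Ioo]
            apply ENNReal.ofReal_le_ofReal
            have : (2*ℓ) - (3*ℓ - r) = r - ℓ := by ring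
            rw [this]
            exact le_max_left _ _
          · rw [Real.volume_Ioo]
            apply ENNReal.ofReal_le_ofReal
            linarith [min_le_left r ℓ]
  have hfin : ENNReal.ofReal (max (r - ℓ) 0) + ENNReal.ofReal (min r ℓ) ≠ ⊤ :=
    ENNReal.add_ne_top.mpr ⟨ENNReal.ofReal_ne_top, ENNReal.ofReal_ne_top⟩
  have := ENNReal.toReal_mono hfin hm
  rw [ENNReal.toReal_add ENNReal.ofReal_ne_top ENNReal.ofReal_ne_top,
    ENNReal.toReal_ofReal (le_max_right _ _),
    ENNReal.toReal_ofReal (le_min hr.le hℓpos.le)] at this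
  rcases le_total r ℓ with h | h
  · rw [max_eq_right (by linarith), min_eq_left h] at this
    linarith
  · rw [max_eq_left (by linarith), min_eq_right h] at this
    linarith


lemma piece2_eq {r : ℝ} (h1 : 3 * 2^(-(n:ℤ)-1) ≤ r) (k : ℕ) :
    Ik k ∩ Set.Ioo (3 * 2^(-(n:ℤ)-1) - r) (3 * 2^(-(n:ℤ)-1) + r)
      = Ik k ∩ Set.Iio (3 * 2^(-(n:ℤ)-1) + r) := by
  have hℓpos : (0:ℝ) < 2^(-(n:ℤ)-1) := two_zpow_pos _
  ext t
  constructor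
  · rintro ⟨htk, _, ht2⟩
    exact ⟨htk, ht2⟩
  · rintro ⟨htk, ht2⟩
    have h0 : 0 < t := (Ik_subset k htk).1
    exact ⟨htk, by nlinarith, ht2⟩

lemma mv_mid {r : ℝ} (h1 : 3 * 2^(-(n:ℤ)-1) ≤ r) (h2 : r ≤ 1 + 3 * 2^(-(n:ℤ)-1)) :
    (volume (UU ∩ Set.Ioo (3 * 2^(-(n:ℤ)-1) - r) (3 * 2^(-(n:ℤ)-1) + r))).toReal
      = (r - 3 * 2^(-(n:ℤ)-1))
        + ∑' k, (volume (Ik k ∩ Set.Iio (3 * 2^(-(n:ℤ)-1) + r))).toReal := by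
  set ℓ : ℝ := 2^(-(n:ℤ)-1) with hℓ
  have hℓpos : (0:ℝ) < ℓ := two_zpow_pos _
  rw [mEq _ measurableSet_Ioo]
  congr 1
  · rw [Set.Ioo_inter_Ioo, Real.volume_Ioo, ENNReal.toReal_ofReal']
    rw [max_eq_right (by linarith : (-1:ℝ) ≤ 3*ℓ - r), min_eq_left (by nlinarith : (0:ℝ) ≤ 3*ℓ + r)]
    rw [max_eq_left (by linarith)]
    ring
  · exact tsum_congr fun k => by rw [piece2_eq hn h1]

lemma mv_big {r : ℝ} (h1 : 1 + 3 * 2^(-(n:ℤ)-1) ≤ r) :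
    (volume (UU ∩ Set.Ioo (3 * 2^(-(n:ℤ)-1) - r) (3 * 2^(-(n:ℤ)-1) + r))).toReal
      = 3/2 := by
  set ℓ : ℝ := 2^(-(n:ℤ)-1) with hℓ
  have hℓpos : (0:ℝ) < ℓ := two_zpow_pos _
  rw [mEq _ measurableSet_Ioo]
  have e1 : (volume (Set.Ioo (-1:ℝ) 0 ∩ Set.Ioo (3*ℓ - r) (3*ℓ + r))).toReal = 1 := by
    rw [Set.Ioo_inter_Ioo, Real.volume_Ioo, ENNReal.toReal_ofReal']
    rw [max_eq_left (by linarith : (3:ℝ)*ℓ - r ≤ -1), min_eq_left (by nlinarith : (0:ℝ) ≤ 3*ℓ + r)]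
    norm_num
  have e2 : ∑' k, (volume (Ik k ∩ Set.Ioo (3*ℓ - r) (3*ℓ + r))).toReal = 1/2 := by
    rw [tsum_congr fun k => by rw [piece2_eq hn (by linarith)]]
    exact phi_full _ (by nlinarith)
  rw [e1, e2]
  norm_num


end Part2

lemma part2 (n : ℕ) (hn : 2 ≤ n) :
    freqFn fFive ((2:ℝ) ^ (1 - (n : ℤ)) - (2:ℝ) ^ (-(n : ℤ) - 1)) =
      1 - ((2:ℝ) ^ (1 - (n : ℤ)) - (2:ℝ) ^ (-(n : ℤ) - 1)) := by
  have hℓpos : (0:ℝ) < 2^(-(n:ℤ)-1) := two_zpow_pos _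
  have hℓ8 := ell_le hn
  have hxeq : (2:ℝ)^(1-(n:ℤ)) - 2^(-(n:ℤ)-1) = 3 * 2^(-(n:ℤ)-1) := by
    rw [h4ell hn]; ring
  rw [hxeq]
  obtain ⟨ℓ, hℓdef⟩ : ∃ ℓ : ℝ, ℓ = (2:ℝ)^(-(n:ℤ)-1) := ⟨_, rfl⟩
  rw [← hℓdef] at hℓpos hℓ8 ⊢
  set A : ℝ := (3 - 12*ℓ)/(4 - 12*ℓ) with hA
  have hd : (0:ℝ) < 4 - 12*ℓ := by linarith
  have hApos : 0 < A := div_pos (by linarith) hd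
  have havg : ∀ r : ℝ, 0 < r → avgFn (fun y => |fFive y|) (3*ℓ) r
      = (1/(2*r)) * (volume (UU ∩ Set.Ioo (3*ℓ - r) (3*ℓ + r))).toReal := by
    intro r hr
    exact avg_eq (3*ℓ) r hr
  have keyeq : avgFn (fun y => |fFive y|) (3*ℓ) (1 - 3*ℓ) = A := by
    rw [havg _ (by linarith)]
    have hm := mv_mid hn (r := 1 - 3*ℓ) (by rw [← hℓdef]; linarith) (by rw [← hℓdef]; linarith)
    rw [← hℓdef] at hm
    rw [hm]
    have hp := phi_full ((3:ℝ) * 2^(-(n:ℤ)-1) + (1 - 3 * 2^(-(n:ℤ)-1))) (by rw [← hℓdef]; linarith)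
    rw [← hℓdef] at hp
    rw [hp, hA, one_div_mul_eq_div,
      div_eq_div_iff (by linarith : (2:ℝ)*(1-3*ℓ) ≠ 0) (by linarith : (4:ℝ)-12*ℓ ≠ 0)]
    ring
  have key : ∀ r : ℝ, 0 < r → r ≠ 1 - 3*ℓ →
      avgFn (fun y => |fFive y|) (3*ℓ) r < A := by
    intro r hr hne
    rw [havg r hr]
    have hrpos : (0:ℝ) < 1/(2*r) := by positivity
    rcases le_or_gt r (3*ℓ) with hc1 | hc1
    · have h1 := H1 hn (r := r) hr (by rw [← hℓdef]; linarith)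
      rw [← hℓdef] at h1
      have h2 : (1/(2*r)) * (volume (UU ∩ Set.Ioo (3*ℓ - r) (3*ℓ + r))).toReal
          ≤ (1/(2*r)) * r := mul_le_mul_of_nonneg_left h1 hrpos.le
      have h3 : (1/(2*r)) * r = 1/2 := by field_simp
      have h4 : (1:ℝ)/2 < A := by
        rw [hA, lt_div_iff₀ hd]; nlinarith
      linarith
    · rcases lt_trichotomy r (1 - 3*ℓ) with hc2 | hc2 | hc2
      · have hm := mv_mid hn (r := r) (by rw [← hℓdef]; linarith) (by rw [← hℓdef]; linarith)
        rw [← hℓdef] at hm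
        rw [hm]
        have hphi := phi_le ((3:ℝ) * 2^(-(n:ℤ)-1) + r) (by rw [← hℓdef]; linarith) (by rw [← hℓdef]; linarith)
        rw [← hℓdef] at hphi
        have hb : (r - 3*ℓ) + ∑' k, (volume (Ik k ∩ Set.Iio (3*ℓ + r))).toReal
            ≤ (3*r - 3*ℓ)/2 := by linarith
        have h2 := mul_le_mul_of_nonneg_left hb hrpos.le
        have h3 : (1/(2*r)) * ((3*r - 3*ℓ)/2) < A := by
          rw [one_div_mul_eq_div, hA, div_lt_div_iff₀ (by linarith) hd]
          nlinarith [mul_pos hℓpos (show (0:ℝ) < 1 - 3*ℓ - r by linarith)]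
        linarith
      · exact absurd hc2 hne
      · rcases le_or_gt r (1 + 3*ℓ) with hc3 | hc3
        · have hm := mv_mid hn (r := r) (by rw [← hℓdef]; linarith) (by rw [← hℓdef]; linarith)
          rw [← hℓdef] at hm
          rw [hm]
          have hp := phi_full ((3:ℝ) * 2^(-(n:ℤ)-1) + r) (by rw [← hℓdef]; linarith)
          rw [← hℓdef] at hp
          rw [hp]
          rw [one_div_mul_eq_div, hA, div_lt_div_iff₀ (by linarith) hd]
          nlinarith [mul_pos (show (0:ℝ) < 1 - 6*ℓ by linarith)
            (show (0:ℝ) < r - (1 - 3*ℓ) by linarith)]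
        · have hm := mv_big hn (r := r) (by rw [← hℓdef]; linarith)
          rw [← hℓdef] at hm
          rw [hm]
          rw [one_div_mul_eq_div, hA, div_lt_div_iff₀ (by linarith) hd]
          nlinarith [mul_nonneg (show (0:ℝ) ≤ 3 - 12*ℓ by linarith)
            (show (0:ℝ) ≤ r - (1 + 3*ℓ) by linarith)]
  have hmax : maxFn fFive (3*ℓ) = ENNReal.ofReal A := by
    apply le_antisymm
    · apply iSup₂_le
      intro r hr
      apply ENNReal.ofReal_le_ofReal
      rcases eq_or_ne r (1 - 3*ℓ) with h | h
      · rw [h, keyeq]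
      · exact (key r hr h).le
    · calc ENNReal.ofReal A
          = ENNReal.ofReal (avgFn (fun y => |fFive y|) (3*ℓ) (1 - 3*ℓ)) := by rw [keyeq]
        _ ≤ maxFn fFive (3*ℓ) :=
            le_iSup₂ (f := fun r (_ : 0 < r) =>
              ENNReal.ofReal (avgFn (fun y => |fFive y|) (3*ℓ) r)) (1 - 3*ℓ) (by linarith)
  have hseteq : freqSet fFive (3*ℓ) = {1 - 3*ℓ} := by
    ext r
    simp only [freqSet, Set.mem_setOf_eq, Set.mem_singleton_iff]
    constructor
    · rintro ⟨hr, heq⟩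
      by_contra h
      have hlt := key r hr h
      rw [hmax] at heq
      have hlt2 := (ENNReal.ofReal_lt_ofReal_iff hApos).mpr hlt
      rw [← heq] at hlt2
      exact lt_irrefl _ hlt2
    · rintro rfl
      exact ⟨by linarith, by rw [hmax, keyeq]⟩
  have hne : (freqSet fFive (3*ℓ)).Nonempty := by
    rw [hseteq]; exact ⟨1 - 3*ℓ, rfl⟩
  rw [freqFn, if_pos hne, hseteq, csInf_singleton]

end Fractal

theorem fractal_frequency_behavior :
    (∀ x : ℝ,
        x ∈ Set.Ioo (-1 : ℝ) 0 ∪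
          ⋃ n : ℕ, Set.Ioo ((2:ℝ) ^ (-(n : ℤ)) - (2:ℝ) ^ (-(n : ℤ) - 2)) ((2:ℝ) ^ (-(n : ℤ))) →
        freqFn fFive x = 0) ∧
    (∀ n : ℕ, 2 ≤ n →
        freqFn fFive ((2:ℝ) ^ (1 - (n : ℤ)) - (2:ℝ) ^ (-(n : ℤ) - 1)) =
          1 - ((2:ℝ) ^ (1 - (n : ℤ)) - (2:ℝ) ^ (-(n : ℤ) - 1))) := by
  constructor
  · intro x hx
    rcases hx with h | h
    · exact Fractal.freq_zero_of_interior Set.subset_union_left h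
    · obtain ⟨n, hn⟩ := Set.mem_iUnion.mp h
      exact Fractal.freq_zero_of_interior
        (fun t ht => Set.mem_union_right _ (Set.mem_iUnion.mpr ⟨n, ht⟩)) hn
  · intro n hn
    exact Fractal.part2 n hn
end

section
/- Let φ(x) := (1 − |x|)·χ_{[−1,1]}(x) and define f₆(x) := Σ_{k≥1} φ(2^{4k} x − 2^{3k}). Then f₆ ∈ L¹(ℝ), every point of ℝ is a Lebesgue point of f₆, and yet the Hardy–Littlewood maximal function Mf₆ is discontinuous at 0. -/
open MeasureTheory Filter Set Topology
open scoped Classical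

/-- `x` is a Lebesgue point of `f`. -/
def IsLebesguePoint (f : ℝ → ℝ) (x : ℝ) : Prop :=
  ∃ c : ℝ, Tendsto (fun r : ℝ => (1 / (2 * r)) * ∫ t in (-r)..r, |f (x + t) - c|)
    (nhdsWithin 0 (Set.Ioi 0)) (nhds 0)

/-- The triangle bump `φ(x) = (1 - |x|)·χ_{[-1,1]}(x)`. -/
noncomputable def triBump : ℝ → ℝ := fun x =>
  Set.indicator (Set.Icc (-1 : ℝ) 1) (fun y => 1 - |y|) x

/-- The function `f₆(x) = Σ_{k≥1} φ(2^{4k} x − 2^{3k})`. -/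
noncomputable def fSix : ℝ → ℝ := fun x =>
  ∑' k : ℕ, triBump ((2:ℝ) ^ (4 * (k + 1)) * x - (2:ℝ) ^ (3 * (k + 1)))

lemma triBump_eq (y : ℝ) : triBump y = max (1 - |y|) 0 := by
  unfold triBump
  by_cases h : y ∈ Set.Icc (-1:ℝ) 1
  · rw [Set.indicator_of_mem h]
    have : |y| ≤ 1 := abs_le.2 ⟨h.1, h.2⟩
    rw [max_eq_left (by linarith)]
  · rw [Set.indicator_of_notMem h]
    rw [Set.mem_Icc, not_and_or, not_le, not_le] at h
    have : 1 < |y| := by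
      rcases h with h | h
      · exact lt_abs.2 (Or.inr (by linarith))
      · exact lt_abs.2 (Or.inl h)
    rw [max_eq_right (by linarith)]

noncomputable def bump (k : ℕ) (x : ℝ) : ℝ :=
  triBump ((2:ℝ) ^ (4 * (k + 1)) * x - (2:ℝ) ^ (3 * (k + 1)))

lemma fSix_eq_tsum (x : ℝ) : fSix x = ∑' k : ℕ, bump k x := rfl

lemma bump_nonneg (k : ℕ) (x : ℝ) : 0 ≤ bump k x := by
  rw [bump, triBump_eq]; exact le_max_right _ _

lemma bump_le_one (k : ℕ) (x : ℝ) : bump k x ≤ 1 := by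
  rw [bump, triBump_eq]
  apply max_le (by simp [abs_nonneg]) zero_le_one

lemma bump_continuous (k : ℕ) : Continuous (bump k) := by
  have : bump k = fun x => max (1 - |(2:ℝ) ^ (4 * (k + 1)) * x - (2:ℝ) ^ (3 * (k + 1))|) 0 :=
    funext fun x => triBump_eq _
  rw [this]; fun_prop

lemma bump_supp {k : ℕ} {x : ℝ} (h : bump k x ≠ 0) :
    (2:ℝ) ^ (3 * (k + 1)) - 1 < (2:ℝ) ^ (4 * (k + 1)) * x ∧
      (2:ℝ) ^ (4 * (k + 1)) * x < (2:ℝ) ^ (3 * (k + 1)) + 1 := by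
  rw [bump, triBump_eq] at h
  have h1 : 0 < 1 - |(2:ℝ) ^ (4 * (k + 1)) * x - (2:ℝ) ^ (3 * (k + 1))| := by
    by_contra hc
    push_neg at hc
    exact h (max_eq_right hc)
  have := abs_lt.1 (by linarith : |(2:ℝ) ^ (4 * (k + 1)) * x - (2:ℝ) ^ (3 * (k + 1))| < 1)
  constructor <;> linarith [this.1, this.2]

lemma two_pow_pos (n : ℕ) : (0:ℝ) < 2 ^ n := by positivity

lemma bump_supp' {k : ℕ} {x : ℝ} (h : bump k x ≠ 0) :
    0 < x ∧ (7/8) * ((2:ℝ)^(k+1))⁻¹ < x ∧ x < (9/8) * ((2:ℝ)^(k+1))⁻¹ := by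
  obtain ⟨h1, h2⟩ := bump_supp h
  set P : ℝ := (2:ℝ)^(k+1) with hPdef
  have hP : 0 < P := two_pow_pos _
  have hP2 : (2:ℝ) ≤ P := by
    calc (2:ℝ) = 2^1 := (pow_one 2).symm
    _ ≤ P := pow_le_pow_right₀ one_le_two (Nat.le_add_left 1 k)
  have e3 : (2:ℝ)^(3*(k+1)) = P^3 := by rw [hPdef, ← pow_mul, mul_comm]
  have e4 : (2:ℝ)^(4*(k+1)) = P^4 := by rw [hPdef, ← pow_mul, mul_comm]
  rw [e3, e4] at h1 h2
  have hP3 : (8:ℝ) ≤ P^3 := by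
    calc (8:ℝ) = 2^3 := by norm_num
    _ ≤ P^3 := pow_le_pow_left₀ (by norm_num) hP2 3
  have hP4 : (0:ℝ) < P^4 := by positivity
  have hPy : P * P⁻¹ = 1 := mul_inv_cancel₀ hP.ne'
  have key : P^4 * P⁻¹ = P^3 := by
    have : P^4 * P⁻¹ = P^3 * (P * P⁻¹) := by ring
    rw [this, hPy, mul_one]
  have hx : 0 < x := by nlinarith
  refine ⟨hx, ?_, ?_⟩
  · have k7 : P^4 * ((7/8) * P⁻¹) = (7/8) * P^3 := by
      rw [(by ring : P^4 * ((7/8) * P⁻¹) = (7/8) * (P^4 * P⁻¹)), key]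
    rw [← mul_lt_mul_iff_right₀ hP4, k7]; nlinarith
  · have k9 : P^4 * ((9/8) * P⁻¹) = (9/8) * P^3 := by
      rw [(by ring : P^4 * ((9/8) * P⁻¹) = (9/8) * (P^4 * P⁻¹)), key]
    rw [← mul_lt_mul_iff_right₀ hP4, k9]; nlinarith

lemma bump_eq_zero_of_lt {k j : ℕ} {x : ℝ} (hkj : k < j) (hk : bump k x ≠ 0) :
    bump j x = 0 := by
  by_contra hj
  obtain ⟨-, hklo, -⟩ := bump_supp' hk
  obtain ⟨-, -, hjhi⟩ := bump_supp' hj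
  have hmono : ((2:ℝ)^(j+1))⁻¹ ≤ ((2:ℝ)^(k+2))⁻¹ :=
    inv_anti₀ (two_pow_pos _) (pow_le_pow_right₀ one_le_two (by omega))
  have he : ((2:ℝ)^(k+2))⁻¹ = (1/2) * ((2:ℝ)^(k+1))⁻¹ := by
    rw [pow_succ]
    field_simp
  have hpos : (0:ℝ) < ((2:ℝ)^(k+1))⁻¹ := by positivity
  nlinarith

lemma exists_bump_eq (x : ℝ) : ∃ k, fSix x = bump k x ∧ ∀ j, j ≠ k → bump j x = 0 := by
  by_cases h : ∃ k, bump k x ≠ 0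
  · obtain ⟨k, hk⟩ := h
    have hz : ∀ j, j ≠ k → bump j x = 0 := by
      intro j hj
      rcases lt_or_gt_of_ne hj with h' | h'
      · by_contra hjz
        exact hk (bump_eq_zero_of_lt h' hjz)
      · exact bump_eq_zero_of_lt h' hk
    exact ⟨k, tsum_eq_single k (fun j hj => hz j hj), hz⟩
  · push_neg at h
    refine ⟨0, ?_, fun j _ => h j⟩
    rw [fSix_eq_tsum]
    simp [h]

lemma fSix_nonneg (x : ℝ) : 0 ≤ fSix x := by
  obtain ⟨k, hk, -⟩ := exists_bump_eq x
  rw [hk]; exact bump_nonneg k x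

lemma fSix_le_one (x : ℝ) : fSix x ≤ 1 := by
  obtain ⟨k, hk, -⟩ := exists_bump_eq x
  rw [hk]; exact bump_le_one k x

lemma abs_fSix (x : ℝ) : |fSix x| = fSix x := abs_of_nonneg (fSix_nonneg x)

lemma bump_le_fSix (k : ℕ) (x : ℝ) : bump k x ≤ fSix x := by
  obtain ⟨j, hj, hz⟩ := exists_bump_eq x
  rcases eq_or_ne k j with rfl | h
  · rw [hj]
  · rw [hz k h]; exact fSix_nonneg x

lemma bump_subset_Icc {k : ℕ} {x : ℝ} (h : bump k x ≠ 0) : x ∈ Set.Icc (0:ℝ) 1 := by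
  obtain ⟨hx, -, hhi⟩ := bump_supp' h
  have h2 : ((2:ℝ)^(k+1))⁻¹ ≤ 2⁻¹ := by
    apply inv_anti₀ (by norm_num)
    calc (2:ℝ) = 2^1 := (pow_one 2).symm
    _ ≤ 2^(k+1) := pow_le_pow_right₀ one_le_two (Nat.le_add_left 1 k)
  exact ⟨hx.le, by nlinarith⟩

lemma bump_integrable (k : ℕ) : Integrable (bump k) := by
  apply (bump_continuous k).integrable_of_hasCompactSupport
  apply HasCompactSupport.intro (isCompact_Icc (a := (0:ℝ)) (b := 1))
  intro x hx
  by_contra h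
  exact hx (bump_subset_Icc h)

lemma summable_bump (x : ℝ) : Summable (fun k => bump k x) := by
  obtain ⟨k, -, hz⟩ := exists_bump_eq x
  apply summable_of_ne_finset_zero (s := {k})
  intro j hj
  exact hz j (by simpa using hj)

lemma fSix_measurable : Measurable fSix := by
  have h : ∀ x, Tendsto (fun N => ∑ k ∈ Finset.range N, bump k x) atTop (𝓝 (fSix x)) :=
    fun x => (summable_bump x).hasSum.tendsto_sum_nat
  exact measurable_of_tendsto_metrizable
    (fun N => Finset.measurable_sum _ (fun k _ => (bump_continuous k).measurable))
    (tendsto_pi_nhds.2 h)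

lemma fSix_le_indicator (x : ℝ) : fSix x ≤ (Set.Icc (0:ℝ) 1).indicator (fun _ => (1:ℝ)) x := by
  obtain ⟨k, hk, -⟩ := exists_bump_eq x
  rcases eq_or_ne (fSix x) 0 with h0 | h0
  · rw [h0]
    exact Set.indicator_nonneg (fun _ _ => zero_le_one) x
  · have hb : bump k x ≠ 0 := fun h => h0 (hk.trans h)
    rw [Set.indicator_of_mem (bump_subset_Icc hb)]
    exact fSix_le_one x

lemma indicator_integrable {a b : ℝ} {s : Set ℝ} (hs : MeasurableSet s) (hsub : s ⊆ Set.Icc a b) :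
    Integrable (s.indicator (fun _ => (1:ℝ))) := by
  apply IntegrableOn.integrable_indicator _ hs
  refine integrableOn_const (ne_of_lt ?_)
  exact lt_of_le_of_lt (measure_mono hsub) measure_Icc_lt_top

lemma fSix_integrable : Integrable fSix := by
  apply Integrable.mono' (indicator_integrable measurableSet_Icc (subset_refl _))
    fSix_measurable.aestronglyMeasurable
  refine Filter.Eventually.of_forall (fun x => ?_)
  rw [Real.norm_eq_abs, abs_fSix]
  exact fSix_le_indicator x

/-- The sharp support interval endpoints. -/
noncomputable def blo (k : ℕ) : ℝ := ((2:ℝ)^(3*(k+1)) - 1) / (2:ℝ)^(4*(k+1))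
noncomputable def bhi (k : ℕ) : ℝ := ((2:ℝ)^(3*(k+1)) + 1) / (2:ℝ)^(4*(k+1))

lemma blo_lt_bhi (k : ℕ) : blo k < bhi k := by
  rw [blo, bhi, div_lt_div_iff_of_pos_right (two_pow_pos _)]
  linarith

lemma bump_le_indicator (k : ℕ) (x : ℝ) :
    bump k x ≤ (Set.Ioo (blo k) (bhi k)).indicator (fun _ => (1:ℝ)) x := by
  rcases eq_or_ne (bump k x) 0 with h0 | h0
  · rw [h0]; exact Set.indicator_nonneg (fun _ _ => zero_le_one) x
  · obtain ⟨hlo, hhi⟩ := bump_supp h0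
    have hpos : (0:ℝ) < (2:ℝ)^(4*(k+1)) := two_pow_pos _
    rw [Set.indicator_of_mem (Set.mem_Ioo.2 ⟨by rw [blo, div_lt_iff₀ hpos]; linarith,
      by rw [bhi, lt_div_iff₀ hpos]; linarith⟩)]
    exact bump_le_one k x

lemma Ioo_subset_Icc01 (k : ℕ) : Set.Ioo (blo k) (bhi k) ⊆ Set.Icc (0:ℝ) 1 := by
  intro x hx
  have e : (2:ℝ)^(4*(k+1)) = 2^(3*(k+1)) * 2^(k+1) := by rw [← pow_add]; congr 1; ring
  have h8 : (8:ℝ) ≤ 2^(3*(k+1)) := by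
    calc (8:ℝ) = 2^3 := by norm_num
    _ ≤ 2^(3*(k+1)) := pow_le_pow_right₀ one_le_two (by omega)
  have h2 : (2:ℝ) ≤ 2^(k+1) := by
    calc (2:ℝ) = 2^1 := (pow_one 2).symm
    _ ≤ 2^(k+1) := pow_le_pow_right₀ one_le_two (by omega)
  have hlo : 0 ≤ blo k := by
    rw [blo]
    apply div_nonneg (by linarith) (two_pow_pos _).le
  have hhi : bhi k ≤ 1 := by
    rw [bhi, div_le_one (two_pow_pos _), e]
    nlinarith
  exact ⟨hlo.trans hx.1.le, hx.2.le.trans hhi⟩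

lemma sixteen_pow (k : ℕ) : ((2:ℝ)^(4*(k+1)))⁻¹ = ((1:ℝ)/16)^(k+1) := by
  rw [pow_mul, one_div, inv_pow]
  norm_num

lemma integral_bump_le (k : ℕ) : ∫ x, bump k x ≤ 2 * ((1:ℝ)/16)^(k+1) := by
  have hInd : Integrable ((Set.Ioo (blo k) (bhi k)).indicator (fun _ => (1:ℝ))) :=
    indicator_integrable measurableSet_Ioo (Ioo_subset_Icc01 k)
  calc ∫ x, bump k x
      ≤ ∫ x, (Set.Ioo (blo k) (bhi k)).indicator (fun _ => (1:ℝ)) x :=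
        integral_mono (bump_integrable k) hInd (bump_le_indicator k)
    _ = bhi k - blo k := by
        rw [MeasureTheory.integral_indicator_const _ measurableSet_Ioo]
        rw [Real.volume_real_Ioo_of_le (by linarith [blo_lt_bhi k]), smul_eq_mul, mul_one]
    _ = 2 * ((1:ℝ)/16)^(k+1) := by
        rw [bhi, blo, div_sub_div_same, ← sixteen_pow]
        ring

lemma fSix_trunc (K N : ℕ) (r : ℝ)
    (hK : ∀ k, k < K → ∀ t ∈ Set.Ioc (-r) r, bump k t = 0) :
    ∀ t ∈ Set.Ioc (-r) r, fSix t ≤ (∑ k ∈ Finset.Ico K N, bump k t)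
      + (Set.Ioc (0:ℝ) (((2:ℝ)^N)⁻¹)).indicator (fun _ => (1:ℝ)) t := by
  intro t ht
  have hsum : 0 ≤ ∑ k ∈ Finset.Ico K N, bump k t :=
    Finset.sum_nonneg (fun k _ => bump_nonneg k t)
  have hind : 0 ≤ (Set.Ioc (0:ℝ) (((2:ℝ)^N)⁻¹)).indicator (fun _ => (1:ℝ)) t :=
    Set.indicator_nonneg (fun _ _ => zero_le_one) t
  obtain ⟨j, hj, hz⟩ := exists_bump_eq t
  rcases eq_or_ne (fSix t) 0 with h0 | h0
  · rw [h0]; exact add_nonneg hsum hind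
  · have hb : bump j t ≠ 0 := fun h => h0 (hj.trans h)
    have hjK : K ≤ j := by
      by_contra hc
      exact hb (hK j (by omega) t ht)
    rcases lt_or_ge j N with hjN | hjN
    · have : bump j t ≤ ∑ k ∈ Finset.Ico K N, bump k t :=
        Finset.single_le_sum (fun k _ => bump_nonneg k t) (Finset.mem_Ico.2 ⟨hjK, hjN⟩)
      rw [hj]; linarith
    · obtain ⟨hpos, -, hhi⟩ := bump_supp' hb
      have h1 : ((2:ℝ)^(j+1))⁻¹ ≤ ((2:ℝ)^(N+1))⁻¹ :=
        inv_anti₀ (two_pow_pos _) (pow_le_pow_right₀ one_le_two (by omega))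
      have h2 : ((2:ℝ)^(N+1))⁻¹ = (1/2) * ((2:ℝ)^N)⁻¹ := by
        rw [pow_succ]; field_simp
      have hmem : t ∈ Set.Ioc (0:ℝ) (((2:ℝ)^N)⁻¹) := by
        constructor
        · exact hpos
        · have hp : (0:ℝ) < ((2:ℝ)^N)⁻¹ := by positivity
          nlinarith
      rw [Set.indicator_of_mem hmem, hj]
      have := bump_le_one j t
      linarith

lemma geom_tail (K N : ℕ) :
    ∑ k ∈ Finset.Ico K N, ((1:ℝ)/16)^(k+1) ≤ (16/15) * ((1:ℝ)/16)^(K+1) := by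
  rcases le_or_gt K N with h | h
  · rw [Finset.sum_Ico_eq_sum_range]
    have : ∀ i, ((1:ℝ)/16)^(K + i + 1) = ((1:ℝ)/16)^(K+1) * ((1:ℝ)/16)^i := by
      intro i; rw [← pow_add]; congr 1; ring
    simp_rw [this, ← Finset.mul_sum]
    have hts : ∑' i : ℕ, ((1:ℝ)/16)^i = (1 - 1/16)⁻¹ :=
      tsum_geometric_of_lt_one (by norm_num) (by norm_num)
    have hsum : ∑ i ∈ Finset.range (N - K), ((1:ℝ)/16)^i ≤ (16:ℝ)/15 := by
      calc ∑ i ∈ Finset.range (N - K), ((1:ℝ)/16)^i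
          ≤ ∑' i : ℕ, ((1:ℝ)/16)^i := Summable.sum_le_tsum _ (fun i _ => by positivity)
            (summable_geometric_of_lt_one (by norm_num) (by norm_num))
        _ = (16:ℝ)/15 := by rw [hts]; norm_num
    have hp : (0:ℝ) ≤ ((1:ℝ)/16)^(K+1) := by positivity
    nlinarith
  · rw [Finset.Ico_eq_empty (by omega), Finset.sum_empty]
    positivity

lemma mass_le (K : ℕ) (r : ℝ) (hr : 0 < r)
    (hK : ∀ k, k < K → ∀ t ∈ Set.Ioc (-r) r, bump k t = 0) :
    ∫ t in Set.Ioc (-r) r, fSix t ≤ (16/5) * ((1:ℝ)/16)^(K+1) := by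
  set N := 4 * (K + 1) with hN
  have hNinv : ((2:ℝ)^N)⁻¹ = ((1:ℝ)/16)^(K+1) := sixteen_pow K
  have hNle1 : ((2:ℝ)^N)⁻¹ ≤ 1 := by
    rw [hNinv]
    calc ((1:ℝ)/16)^(K+1) ≤ 1^(K+1) := pow_le_pow_left₀ (by norm_num) (by norm_num) _
    _ = 1 := one_pow _
  have hIndInt : Integrable ((Set.Ioc (0:ℝ) (((2:ℝ)^N)⁻¹)).indicator (fun _ => (1:ℝ))) :=
    indicator_integrable measurableSet_Ioc
      (fun x hx => ⟨hx.1.le, hx.2.trans hNle1⟩)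
  set G : ℝ → ℝ := fun t => (∑ k ∈ Finset.Ico K N, bump k t)
      + (Set.Ioc (0:ℝ) (((2:ℝ)^N)⁻¹)).indicator (fun _ => (1:ℝ)) t with hG
  have hGint : Integrable G :=
    (integrable_finset_sum _ (fun k _ => bump_integrable k)).add hIndInt
  have hGnn : ∀ t, 0 ≤ G t := fun t =>
    add_nonneg (Finset.sum_nonneg (fun k _ => bump_nonneg k t))
      (Set.indicator_nonneg (fun _ _ => zero_le_one) t)
  calc ∫ t in Set.Ioc (-r) r, fSix t
      ≤ ∫ t in Set.Ioc (-r) r, G t := by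
        apply setIntegral_mono_on fSix_integrable.integrableOn hGint.integrableOn
          measurableSet_Ioc
        exact fSix_trunc K N r hK
    _ ≤ ∫ t, G t := setIntegral_le_integral hGint (Filter.Eventually.of_forall hGnn)
    _ = (∑ k ∈ Finset.Ico K N, ∫ t, bump k t) + ((2:ℝ)^N)⁻¹ := by
        rw [hG]
        rw [integral_add (integrable_finset_sum _ (fun k _ => bump_integrable k)) hIndInt,
          integral_finset_sum _ (fun k _ => bump_integrable k),
          MeasureTheory.integral_indicator_const _ measurableSet_Ioc]
        rw [Real.volume_real_Ioc_of_le (by positivity), smul_eq_mul, mul_one, sub_zero]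
    _ ≤ (∑ k ∈ Finset.Ico K N, 2 * ((1:ℝ)/16)^(k+1)) + ((1:ℝ)/16)^(K+1) := by
        rw [hNinv]
        gcongr with k hk
        exact integral_bump_le k
    _ ≤ 2 * ((16/15) * ((1:ℝ)/16)^(K+1)) + ((1:ℝ)/16)^(K+1) := by
        rw [← Finset.mul_sum]
        have := geom_tail K N
        nlinarith
    _ ≤ (16/5) * ((1:ℝ)/16)^(K+1) := by
        have hp : (0:ℝ) ≤ ((1:ℝ)/16)^(K+1) := by positivity
        nlinarith

lemma mass_le_poly {r : ℝ} (hr : 0 < r) :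
    ∫ t in Set.Ioc (-r) r, fSix t ≤ 8 * r^4 := by
  have hex : ∃ K : ℕ, (7/8) * ((2:ℝ)^(K+1))⁻¹ < r := by
    obtain ⟨n, hn⟩ := exists_pow_lt_of_lt_one hr (by norm_num : (1/2:ℝ) < 1)
    refine ⟨n, lt_of_le_of_lt ?_ hn⟩
    rw [one_div, inv_pow]
    have h1 : ((2:ℝ)^(n+1))⁻¹ ≤ ((2:ℝ)^n)⁻¹ :=
      inv_anti₀ (two_pow_pos _) (pow_le_pow_right₀ one_le_two (by omega))
    have h2 : (0:ℝ) < ((2:ℝ)^(n+1))⁻¹ := by positivity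
    nlinarith
  set K := Nat.find hex with hKdef
  have hKspec : (7/8) * ((2:ℝ)^(K+1))⁻¹ < r := Nat.find_spec hex
  have hKmin : ∀ k, k < K → r ≤ (7/8) * ((2:ℝ)^(k+1))⁻¹ := by
    intro k hk
    have := Nat.find_min hex hk
    linarith [not_lt.1 this]
  have hK : ∀ k, k < K → ∀ t ∈ Set.Ioc (-r) r, bump k t = 0 := by
    intro k hk t ht
    by_contra hb
    obtain ⟨-, hlo, -⟩ := bump_supp' hb
    have := hKmin k hk
    linarith [ht.2]
  have hmass := mass_le K r hr hK
  have hpow : ((1:ℝ)/16)^(K+1) = (((2:ℝ)^(K+1))⁻¹)^4 := by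
    rw [← sixteen_pow K, inv_pow, ← pow_mul]
    congr 2
    ring
  have hlt : ((2:ℝ)^(K+1))⁻¹ < (8/7) * r := by
    have : (0:ℝ) < (7:ℝ)/8 := by norm_num
    nlinarith
  have h4 : (((2:ℝ)^(K+1))⁻¹)^4 ≤ ((8/7) * r)^4 :=
    pow_le_pow_left₀ (by positivity) hlt.le 4
  calc ∫ t in Set.Ioc (-r) r, fSix t ≤ (16/5) * ((1:ℝ)/16)^(K+1) := hmass
    _ ≤ (16/5) * ((8/7) * r)^4 := by rw [hpow]; gcongr
    _ ≤ 8 * r^4 := by nlinarith [pow_pos hr 4, sq_nonneg r, sq_nonneg (r*r)]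

lemma mass_le_total {r : ℝ} (hr : 0 < r) :
    ∫ t in Set.Ioc (-r) r, fSix t ≤ 1/5 := by
  have := mass_le 0 r hr (fun k hk => absurd hk (by omega))
  calc ∫ t in Set.Ioc (-r) r, fSix t ≤ (16/5) * ((1:ℝ)/16)^(0+1) := this
    _ ≤ 1/5 := by norm_num


lemma avg_zero_eq {r : ℝ} (hr : 0 < r) :
    avgFn (fun y => |fSix y|) 0 r = (1/(2*r)) * ∫ t in Set.Ioc (-r) r, fSix t := by
  rw [avgFn]
  congr 1
  rw [intervalIntegral.integral_of_le (by linarith)]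
  simp only [zero_add, abs_fSix]

lemma avg_zero_le {r : ℝ} (hr : 0 < r) : avgFn (fun y => |fSix y|) 0 r ≤ 2/5 := by
  rw [avg_zero_eq hr]
  have h2r : (0:ℝ) < 1/(2*r) := by positivity
  rcases le_or_gt r (1/4) with h | h
  · have := mass_le_poly hr
    calc (1/(2*r)) * ∫ t in Set.Ioc (-r) r, fSix t ≤ (1/(2*r)) * (8 * r^4) := by nlinarith
      _ = 4 * r^3 := by field_simp; ring
      _ ≤ 2/5 := by nlinarith [pow_le_pow_left₀ hr.le h 3]
  · have := mass_le_total hr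
    have h1 : (1:ℝ)/(2*r) ≤ 2 := by rw [div_le_iff₀ (by linarith)]; linarith
    have hmass_nn : 0 ≤ ∫ t in Set.Ioc (-r) r, fSix t :=
      setIntegral_nonneg measurableSet_Ioc (fun t _ => fSix_nonneg t)
    nlinarith

lemma avg_zero_cube {r : ℝ} (hr : 0 < r) :
    avgFn (fun y => |fSix y|) 0 r ≤ 4 * r^3 := by
  rw [avg_zero_eq hr]
  have := mass_le_poly hr
  have h2r : (0:ℝ) < 1/(2*r) := by positivity
  calc (1/(2*r)) * ∫ t in Set.Ioc (-r) r, fSix t ≤ (1/(2*r)) * (8 * r^4) := by nlinarith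
    _ = 4 * r^3 := by field_simp; ring

lemma bump_eq_max (k : ℕ) (x : ℝ) :
    bump k x = max (1 - |(2:ℝ)^(4*(k+1)) * x - (2:ℝ)^(3*(k+1))|) 0 := triBump_eq _

lemma shift_intervalIntegrable (x a b : ℝ) :
    IntervalIntegrable (fun y => fSix (x + y)) volume a b := by
  have := (fSix_integrable.intervalIntegrable (a := x + a) (b := x + b)).comp_add_left x
  simpa using this

lemma avg_le_one (x : ℝ) {r : ℝ} (hr : 0 < r) : avgFn (fun y => |fSix y|) x r ≤ 1 := by
  rw [avgFn]
  simp only [abs_fSix]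
  have h1 : ∫ y in (-r)..r, fSix (x + y) ≤ ∫ y in (-r)..r, (1:ℝ) := by
    apply intervalIntegral.integral_mono_on (by linarith) (shift_intervalIntegrable x _ _)
      intervalIntegrable_const
    intro t _
    exact fSix_le_one _
  rw [intervalIntegral.integral_const, smul_eq_mul, mul_one] at h1
  have h2r : (0:ℝ) < 1/(2*r) := by positivity
  calc (1/(2*r)) * ∫ y in (-r)..r, fSix (x + y) ≤ (1/(2*r)) * (r - -r) := by nlinarith
    _ = 1 := by field_simp; ring

lemma maxFn_le_one (x : ℝ) : maxFn fSix x ≤ ENNReal.ofReal 1 :=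
  iSup₂_le fun r hr => ENNReal.ofReal_le_ofReal (avg_le_one x hr)

lemma maxFn_zero_le : maxFn fSix 0 ≤ ENNReal.ofReal (2/5) :=
  iSup₂_le fun r hr => ENNReal.ofReal_le_ofReal (avg_zero_le hr)

lemma tri_cont : Continuous (fun u : ℝ => max (1 - |u|) 0) := by fun_prop

lemma tri_int : ∫ u in (-1:ℝ)..(1:ℝ), max (1 - |u|) 0 = 1 := by
  have e1 : ∫ u in (-1:ℝ)..(0:ℝ), max (1 - |u|) 0 = 1/2 := by
    rw [intervalIntegral.integral_congr (g := fun u => 1 + u) ?_]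
    · rw [intervalIntegral.integral_add intervalIntegrable_const
        (intervalIntegral.intervalIntegrable_id), intervalIntegral.integral_const,
        integral_id]
      norm_num
    · intro u hu
      rw [Set.uIcc_of_le (by norm_num : (-1:ℝ) ≤ 0)] at hu
      have h1 : |u| = -u := abs_of_nonpos hu.2
      have h2 : (0:ℝ) ≤ 1 - |u| := by rw [h1]; linarith [hu.1]
      show max (1 - |u|) 0 = 1 + u
      rw [max_eq_left h2, h1]
      ring
  have e2 : ∫ u in (0:ℝ)..(1:ℝ), max (1 - |u|) 0 = 1/2 := by
    rw [intervalIntegral.integral_congr (g := fun u => 1 - u) ?_]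
    · rw [intervalIntegral.integral_sub intervalIntegrable_const
        (intervalIntegral.intervalIntegrable_id), intervalIntegral.integral_const,
        integral_id]
      norm_num
    · intro u hu
      rw [Set.uIcc_of_le (by norm_num : (0:ℝ) ≤ 1)] at hu
      have h1 : |u| = u := abs_of_nonneg hu.1
      have h2 : (0:ℝ) ≤ 1 - |u| := by rw [h1]; linarith [hu.2]
      show max (1 - |u|) 0 = 1 - u
      rw [max_eq_left h2, h1]
  have := intervalIntegral.integral_add_adjacent_intervals
    (a := (-1:ℝ)) (b := 0) (c := 1) (f := fun u => max (1 - |u|) 0) (μ := volume)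
    (tri_cont.intervalIntegrable _ _) (tri_cont.intervalIntegrable _ _)
  rw [e1, e2] at this
  linarith

lemma bump_center_int (n : ℕ) :
    ∫ y in (-(((2:ℝ)^(4*(n+1)))⁻¹))..(((2:ℝ)^(4*(n+1)))⁻¹),
      bump n (((2:ℝ)^(n+1))⁻¹ + y) = ((2:ℝ)^(4*(n+1)))⁻¹ := by
  set c : ℝ := (2:ℝ)^(4*(n+1)) with hc
  have hc0 : c ≠ 0 := (two_pow_pos _).ne'
  have hcx : c * ((2:ℝ)^(n+1))⁻¹ = (2:ℝ)^(3*(n+1)) := by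
    have e : c = (2:ℝ)^(3*(n+1)) * 2^(n+1) := by rw [hc, ← pow_add]; congr 1; ring
    rw [e, mul_assoc, mul_inv_cancel₀ (two_pow_pos (n+1)).ne', mul_one]
  have key : ∀ y : ℝ, bump n (((2:ℝ)^(n+1))⁻¹ + y) = max (1 - |c * y|) 0 := by
    intro y
    rw [bump_eq_max]
    congr 2
    rw [mul_add, hcx]
    rw [hc]; ring
  simp_rw [key]
  rw [intervalIntegral.integral_comp_mul_left (fun u => max (1 - |u|) 0) hc0]
  rw [mul_neg, mul_inv_cancel₀ hc0, tri_int]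
  simp

lemma avg_xn (n : ℕ) :
    (1/2 : ℝ) ≤ avgFn (fun y => |fSix y|) (((2:ℝ)^(n+1))⁻¹) (((2:ℝ)^(4*(n+1)))⁻¹) := by
  set r : ℝ := ((2:ℝ)^(4*(n+1)))⁻¹ with hr
  have hr0 : 0 < r := by positivity
  rw [avgFn]
  simp only [abs_fSix]
  have h1 : ∫ y in (-r)..r, bump n (((2:ℝ)^(n+1))⁻¹ + y)
      ≤ ∫ y in (-r)..r, fSix (((2:ℝ)^(n+1))⁻¹ + y) := by
    apply intervalIntegral.integral_mono_on (by linarith)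
      (((bump_continuous n).comp (continuous_const.add continuous_id)).intervalIntegrable _ _)
      (shift_intervalIntegrable _ _ _)
    intro t _
    exact bump_le_fSix n _
  rw [bump_center_int n] at h1
  have h2r : (0:ℝ) < 1/(2*r) := by positivity
  calc (1/2 : ℝ) = (1/(2*r)) * r := by field_simp
    _ ≤ (1/(2*r)) * ∫ y in (-r)..r, fSix (((2:ℝ)^(n+1))⁻¹ + y) := by nlinarith

lemma fSix_continuousAt {x : ℝ} (hx : x ≠ 0) : ContinuousAt fSix x := by
  have h0 : 0 < |x| := abs_pos.2 hx
  obtain ⟨N, hN⟩ := exists_pow_lt_of_lt_one h0 (by norm_num : (1/2:ℝ) < 1)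
  have hNx : ((2:ℝ)^N)⁻¹ < |x| := by
    calc ((2:ℝ)^N)⁻¹ = (1/2:ℝ)^N := by rw [one_div, inv_pow]
      _ < |x| := hN
  set U : Set ℝ := {y | ((2:ℝ)^N)⁻¹ < |y|} with hU
  have hUopen : IsOpen U := isOpen_lt continuous_const continuous_abs
  have hxU : x ∈ U := hNx
  have hEq : ∀ y ∈ U, fSix y = ∑ k ∈ Finset.range N, bump k y := by
    intro y hy
    apply tsum_eq_sum
    intro k hk
    have hkN : N ≤ k := by simpa using hk
    by_contra hb
    obtain ⟨hpos, -, hhi⟩ := bump_supp' hb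
    have h1 : ((2:ℝ)^(k+1))⁻¹ ≤ ((2:ℝ)^(N+1))⁻¹ :=
      inv_anti₀ (two_pow_pos _) (pow_le_pow_right₀ one_le_two (by omega))
    have h2 : ((2:ℝ)^(N+1))⁻¹ = (1/2) * ((2:ℝ)^N)⁻¹ := by
      rw [pow_succ]; field_simp
    have hyabs : |y| = y := abs_of_pos hpos
    have : ((2:ℝ)^N)⁻¹ < y := by rw [← hyabs]; exact hy
    have hp : (0:ℝ) < ((2:ℝ)^N)⁻¹ := by positivity
    nlinarith
  have hcont : ContinuousAt (fun y => ∑ k ∈ Finset.range N, bump k y) x := by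
    apply Continuous.continuousAt
    exact continuous_finset_sum _ (fun k _ => bump_continuous k)
  apply hcont.congr
  apply Filter.eventuallyEq_of_mem (hUopen.mem_nhds hxU)
  intro y hy
  exact (hEq y hy).symm

lemma isLebesguePoint_of_continuousAt {x : ℝ} (hc : ContinuousAt fSix x) :
    IsLebesguePoint fSix x := by
  refine ⟨fSix x, ?_⟩
  rw [NormedAddCommGroup.tendsto_nhds_zero]
  intro ε hε
  obtain ⟨δ, hδ, hball⟩ := Metric.continuousAt_iff.1 hc (ε/2) (by linarith)
  rw [eventually_nhdsWithin_iff]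
  filter_upwards [eventually_nhds_iff.2 ⟨Set.Ioo (-δ) δ, fun y hy => hy,
    isOpen_Ioo, by constructor <;> linarith⟩] with r hr hrpos
  rw [Set.mem_Ioi] at hrpos
  obtain ⟨hr1, hr2⟩ := hr
  have hint : ∀ t ∈ Set.Icc (-r) r, |fSix (x + t) - fSix x| ≤ ε/2 := by
    intro t ht
    apply (hball (show dist (x+t) x < δ by
      rw [Real.dist_eq]
      have : |t| < δ := abs_lt.2 ⟨by linarith [ht.1], by linarith [ht.2]⟩
      simpa using this)).le
  have hII : IntervalIntegrable (fun t => |fSix (x + t) - fSix x|) volume (-r) r := by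
    exact ((shift_intervalIntegrable x (-r) r).sub intervalIntegrable_const).abs
  have hbound : ∫ t in (-r)..r, |fSix (x + t) - fSix x| ≤ ∫ t in (-r)..r, (ε/2 : ℝ) := by
    apply intervalIntegral.integral_mono_on (by linarith) hII intervalIntegrable_const
    intro t ht
    exact hint t ht
  rw [intervalIntegral.integral_const, smul_eq_mul] at hbound
  have hnn : 0 ≤ ∫ t in (-r)..r, |fSix (x + t) - fSix x| :=
    intervalIntegral.integral_nonneg (by linarith) (fun t _ => abs_nonneg _)
  have h2r : (0:ℝ) < 1/(2*r) := by positivity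
  have : (1/(2*r)) * ∫ t in (-r)..r, |fSix (x + t) - fSix x| ≤ ε/2 := by
    calc (1/(2*r)) * ∫ t in (-r)..r, |fSix (x + t) - fSix x|
        ≤ (1/(2*r)) * ((r - -r) * (ε/2)) := by nlinarith
      _ = ε/2 := by field_simp; ring
  rw [Real.norm_eq_abs, abs_of_nonneg (by positivity)]
  linarith

lemma isLebesguePoint_zero : IsLebesguePoint fSix 0 := by
  refine ⟨0, ?_⟩
  have heq : (fun r : ℝ => (1 / (2 * r)) * ∫ t in (-r)..r, |fSix (0 + t) - 0|)
      = fun r : ℝ => avgFn (fun y => |fSix y|) 0 r := by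
    funext r
    simp only [avgFn, sub_zero]
  rw [heq]
  apply squeeze_zero' (g := fun r => 4 * r^3)
  · filter_upwards [self_mem_nhdsWithin] with r hr
    rw [Set.mem_Ioi] at hr
    rw [avgFn]
    have h1 : (0:ℝ) ≤ 1/(2*r) := by positivity
    have h2 : 0 ≤ ∫ y in (-r)..r, |fSix (0 + y)| :=
      intervalIntegral.integral_nonneg (by linarith) (fun t _ => abs_nonneg _)
    positivity
  · filter_upwards [self_mem_nhdsWithin] with r hr
    rw [Set.mem_Ioi] at hr
    exact avg_zero_cube hr
  · have : Continuous (fun r : ℝ => 4 * r^3) := by fun_prop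
    exact (this.tendsto' 0 0 (by norm_num)).mono_left nhdsWithin_le_nhds

lemma maxFn_xn (n : ℕ) : ENNReal.ofReal (1/2) ≤ maxFn fSix (((2:ℝ)^(n+1))⁻¹) := by
  have hr : (0:ℝ) < ((2:ℝ)^(4*(n+1)))⁻¹ := by positivity
  refine le_trans (ENNReal.ofReal_le_ofReal (avg_xn n)) ?_
  exact le_iSup₂ (f := fun (r : ℝ) (_ : 0 < r) =>
    ENNReal.ofReal (avgFn (fun y => |fSix y|) (((2:ℝ)^(n+1))⁻¹) r)) _ hr

lemma maxFn_discont : ¬ ContinuousAt (fun y => (maxFn fSix y).toReal) 0 := by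
  intro hcont
  set F : ℝ → ℝ := fun y => (maxFn fSix y).toReal with hF
  have hxn : Tendsto (fun n : ℕ => ((2:ℝ)^(n+1))⁻¹) atTop (𝓝 0) := by
    have h2 : Tendsto (fun n : ℕ => ((1:ℝ)/2)^n) atTop (𝓝 0) :=
      tendsto_pow_atTop_nhds_zero_of_lt_one (by norm_num) (by norm_num)
    have heq : (fun n : ℕ => ((2:ℝ)^(n+1))⁻¹) = fun n : ℕ => ((1:ℝ)/2)^(n+1) := by
      funext n; rw [one_div, inv_pow]
    rw [heq]
    exact h2.comp (tendsto_add_atTop_nat 1)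
  have hlim : Tendsto (fun n : ℕ => F (((2:ℝ)^(n+1))⁻¹)) atTop (𝓝 (F 0)) :=
    (hcont.tendsto).comp hxn
  have hF0 : F 0 ≤ 2/5 := by
    have := ENNReal.toReal_mono ENNReal.ofReal_ne_top maxFn_zero_le
    rwa [ENNReal.toReal_ofReal (by norm_num)] at this
  have hFn : ∀ n : ℕ, (1/2 : ℝ) ≤ F (((2:ℝ)^(n+1))⁻¹) := by
    intro n
    have hne : maxFn fSix (((2:ℝ)^(n+1))⁻¹) ≠ ⊤ :=
      ((maxFn_le_one _).trans_lt ENNReal.ofReal_lt_top).ne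
    have := ENNReal.toReal_mono hne (maxFn_xn n)
    rwa [ENNReal.toReal_ofReal (by norm_num)] at this
  have := ge_of_tendsto hlim (Filter.Eventually.of_forall hFn)
  linarith

theorem lebesgue_points_everywhere_but_maximal_discontinuous :
    Integrable fSix ∧ (∀ x : ℝ, IsLebesguePoint fSix x) ∧
      ¬ ContinuousAt (fun y => (maxFn fSix y).toReal) 0 := by
  refine ⟨fSix_integrable, fun x => ?_, maxFn_discont⟩
  rcases eq_or_ne x 0 with rfl | hx
  · exact isLebesguePoint_zero
  · exact isLebesguePoint_of_continuousAt (fSix_continuousAt hx)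
end
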